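/- Let p ≥ 0 and let ξ₁ < ξ₂ be real numbers. Denote by B_{i,q} the Bernstein polynomials of degree q on the reference interval [0,1], and by B^{[ξ₁,ξ₂]}_{k,p} the Bernstein polynomials of degree p on [ξ₁,ξ₂]. Then for every j = 1,…,p+1 and every real ξ, B_{j,p}(ξ) = Σ_{k=1}^{p+1} c_{kj} · B^{[ξ₁,ξ₂]}_{k,p}(ξ), where c_{kj} = Σ_{l = max(1, k+j−p−1)}^{min(k,j)} B_{l,k−1}(ξ₂) · B_{j−l+1, p−k+1}(ξ₁). Equivalently, the matrix with entries (M⁻¹)_{jk} = Σ_{l = max(1, j+k−p−1)}^{min(j,k)} B_{l,j−1}(ξ₂)·B_{k−l+1,p−j+1}(ξ₁) is invertible and is the inverse of the Bernstein basis transformation matrix M defined by the relation tilde-B = M^{−T} B between the Bernstein bases on the two intervals. -/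

import Mathlib

/-!
Expanding `(a(1-x) + bx)^j` and `((1-a)(1-x) + (1-b)x)^(p-j)` binomially writes
`B_{j+1,p}(a(1-x) + bx)` in the Bernstein basis in `x`; the trinomial identity
`C(p,j) C(j,m) C(p-j,i) = C(p,m+i) C(m+i,m) C(p-m-i,j-m)` identifies the coefficients with the
entries of `MinvMat p a b`. Composing affine reparametrizations multiplies these matrices, and
the identity reparametrization gives the identity matrix because the Bernstein polynomials are
linearly independent. Hence the matrix of the inverse reparametrization is an inverse of
`MinvMat p ξ₁ ξ₂`, and both expansions follow since `bernAB` is `bern01` after the change of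
variable `(ξ - ξ₁) / (ξ₂ - ξ₁)`.
-/

/-- The `i`-th (1-based) Bernstein polynomial of degree `q` on the reference interval `[0,1]`:
`B_{i,q}(x) = C(q,i−1) (1−x)^(q+1−i) x^(i−1)`. -/
noncomputable def bern01 (q i : ℕ) (x : ℝ) : ℝ :=
  (q.choose (i - 1) : ℝ) * (1 - x) ^ (q + 1 - i) * x ^ (i - 1)

/-- The `i`-th (1-based) Bernstein polynomial of degree `p` on `[a,b]`:
`B_{i,p}(x) = C(p,i−1) ((b−x)/(b−a))^(p+1−i) ((x−a)/(b−a))^(i−1)`. -/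
noncomputable def bernAB (p i : ℕ) (a b x : ℝ) : ℝ :=
  (p.choose (i - 1) : ℝ) * ((b - x) / (b - a)) ^ (p + 1 - i) * ((x - a) / (b - a)) ^ (i - 1)

/-- The matrix with entries
`(M⁻¹)_{jk} = ∑_{l = max(1, j+k−p−1)}^{min(j,k)} B_{l,j−1}(ξ₂) · B_{k−l+1,p−j+1}(ξ₁)`
(1-based indices `j,k = 1,…,p+1`; `B` are the Bernstein polynomials on `[0,1]`). -/
noncomputable def MinvMat (p : ℕ) (ξ₁ ξ₂ : ℝ) : Matrix (Fin (p + 1)) (Fin (p + 1)) ℝ :=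
  Matrix.of fun j k =>
    ∑ l ∈ Finset.Icc (max 1 (((j : ℕ) + 1) + ((k : ℕ) + 1) - (p + 1)))
        (min ((j : ℕ) + 1) ((k : ℕ) + 1)),
      bern01 (j : ℕ) l ξ₂ * bern01 (p - (j : ℕ)) (((k : ℕ) + 1) - l + 1) ξ₁

open Finset

theorem Nat.choose_mul_choose_mul_choose_sub {p j m i : ℕ} (hm : m ≤ j) :
    p.choose j * j.choose m * (p - j).choose i =
      p.choose (m + i) * (m + i).choose m * (p - (m + i)).choose (j - m) := by
  -- both sides of `hswap` equal `C(n, s+t) C(s+t, s)`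
  have hswap : ∀ n s t : ℕ, n.choose s * (n - s).choose t = n.choose t * (n - t).choose s := by
    intro n s t
    rw [← Nat.add_sub_cancel_left (n := s) (m := t), ← Nat.choose_mul (Nat.le_add_right s t),
      Nat.add_sub_cancel_left, Nat.choose_symm_add, Nat.choose_mul (Nat.le_add_left t s),
      Nat.add_sub_cancel]
  have hpj : p - j = p - m - (j - m) := by omega
  rw [Nat.choose_mul hm, Nat.choose_mul (Nat.le_add_right m i), Nat.add_sub_cancel_left,
    mul_assoc, mul_assoc, hpj, hswap, Nat.sub_sub]

theorem bern01_succ (q k : ℕ) (x : ℝ) :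
    bern01 q (k + 1) x = q.choose k * (1 - x) ^ (q - k) * x ^ k := by
  simp only [bern01, Nat.add_sub_cancel, Nat.add_sub_add_right]

theorem bernAB_eq_bern01 (p i : ℕ) {a b : ℝ} (hab : a ≠ b) (x : ℝ) :
    bernAB p i a b x = bern01 p i ((x - a) / (b - a)) := by
  have hba : b - a ≠ 0 := sub_ne_zero.2 hab.symm
  rw [bernAB, bern01, show 1 - (x - a) / (b - a) = (b - x) / (b - a) by field_simp; ring]

theorem sum_range_sum_Icc_eq_sum_range_sum_range {M : Type*} [AddCommMonoid M] {p j : ℕ}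
    (hj : j ≤ p) (F : ℕ → ℕ → M) :
    ∑ k ∈ range (p + 1), ∑ m ∈ Icc (k + j - p) (min k j), F k m =
      ∑ i ∈ range (p - j + 1), ∑ m ∈ range (j + 1), F (m + i) m := by
  rw [sum_sigma', sum_sigma']
  refine sum_nbij' (fun q => ⟨q.1 - q.2, q.2⟩) (fun q => ⟨q.2 + q.1, q.2⟩) ?_ ?_ ?_ ?_ ?_ <;>
    rintro ⟨k, m⟩ hq <;>
    simp only [mem_sigma, mem_range, mem_Icc, Sigma.mk.inj_iff, heq_eq_eq, and_true] at hq ⊢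
  any_goals omega
  rw [Nat.add_sub_cancel' (le_min_iff.1 hq.2.2).1]

/-- `MinvMat p a b k j` with `0`-based indices and summation index `m = l - 1`. -/
noncomputable def bernsteinChangeCoeff (p : ℕ) (a b : ℝ) (k j : ℕ) : ℝ :=
  ∑ m ∈ Icc (k + j - p) (min k j), bern01 k (m + 1) b * bern01 (p - k) (j - m + 1) a

theorem MinvMat_apply (p : ℕ) (a b : ℝ) (k j : Fin (p + 1)) :
    MinvMat p a b k j = bernsteinChangeCoeff p a b k j := by
  have hlo : max 1 ((k : ℕ) + 1 + ((j : ℕ) + 1) - (p + 1)) = (k + j - p : ℕ) + 1 := by omega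
  rw [MinvMat, Matrix.of_apply, hlo, Nat.succ_min_succ, ← map_add_right_Icc, sum_map,
    bernsteinChangeCoeff]
  simp only [addRightEmbedding_apply, Nat.add_sub_add_right]

theorem bern01_comp_affine (p : ℕ) (a b x : ℝ) (j : Fin (p + 1)) :
    bern01 p ((j : ℕ) + 1) (a * (1 - x) + b * x) =
      ∑ k : Fin (p + 1), MinvMat p a b k j * bern01 p ((k : ℕ) + 1) x := by
  obtain ⟨j, hj⟩ := j
  have hjp : j ≤ p := Nat.lt_succ_iff.1 hj
  simp only [MinvMat_apply]
  rw [Fin.sum_univ_eq_sum_range (fun k => bernsteinChangeCoeff p a b k j * bern01 p (k + 1) x)]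
  simp only [bernsteinChangeCoeff, sum_mul]
  rw [sum_range_sum_Icc_eq_sum_range_sum_range hjp, bern01_succ,
    show 1 - (a * (1 - x) + b * x) = (1 - b) * x + (1 - a) * (1 - x) by ring,
    add_comm (a * (1 - x)), add_pow, add_pow, mul_assoc, sum_mul_sum, mul_sum]
  refine sum_congr rfl fun i hi => ?_
  rw [mul_sum]
  refine sum_congr rfl fun m hm => ?_
  rw [mem_range] at hi hm
  have htri : (p.choose j * j.choose m * (p - j).choose i : ℝ) =
      p.choose (m + i) * (m + i).choose m * (p - (m + i)).choose (j - m) := by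
    exact_mod_cast Nat.choose_mul_choose_mul_choose_sub (p := p) (i := i) (by omega)
  rw [bern01_succ, bern01_succ, bern01_succ, Nat.add_sub_cancel_left,
    show p - (m + i) - (j - m) = p - j - i by omega,
    show (1 - x) ^ (p - (m + i)) = (1 - x) ^ (p - j - i) * (1 - x) ^ (j - m) by
      rw [← pow_add]; congr 1; omega,
    mul_pow, mul_pow, mul_pow, mul_pow]
  linear_combination ((1 - b) ^ i * x ^ i * (1 - a) ^ (p - j - i) * (1 - x) ^ (p - j - i) *
      b ^ m * x ^ m * a ^ (j - m) * (1 - x) ^ (j - m)) * htri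

theorem one_add_pow_mul_bern01_div_one_add {p k : ℕ} (hk : k ≤ p) {y : ℝ} (hy : 1 + y ≠ 0) :
    (1 + y) ^ p * bern01 p (k + 1) (y / (1 + y)) = p.choose k * y ^ k := by
  rw [bern01_succ, show 1 - y / (1 + y) = 1 / (1 + y) by field_simp; ring,
    div_pow, div_pow, one_pow]
  nth_rewrite 1 [← Nat.sub_add_cancel hk]
  rw [pow_add]
  field_simp

/-- Substituting `x = y / (1 + y)` turns `∑ₖ cₖ B_{k+1,p}(x)` into `(1 + y)⁻ᵖ ∑ₖ cₖ C(p,k) yᵏ`. -/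
theorem linearIndependent_bern01 (p : ℕ) :
    LinearIndependent ℝ fun k : Fin (p + 1) => bern01 p ((k : ℕ) + 1) := by
  rw [Fintype.linearIndependent_iff]
  intro c hc k
  set Q : Polynomial ℝ := ∑ i : Fin (p + 1), Polynomial.monomial i (c i * p.choose i)
  have hQ : Q = 0 := by
    refine Q.eq_zero_of_infinite_isRoot ((Set.Ioi_infinite 0).mono fun y (hy : 0 < y) => ?_)
    have hy' : 1 + y ≠ 0 := by positivity
    have hsum := congrFun hc (y / (1 + y))
    simp only [Finset.sum_apply, Pi.smul_apply, smul_eq_mul, Pi.zero_apply] at hsum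
    simp only [Set.mem_ofPred_eq, Polynomial.IsRoot, Q, Polynomial.eval_finsetSum,
      Polynomial.eval_monomial]
    calc ∑ i : Fin (p + 1), c i * p.choose i * y ^ (i : ℕ)
        = (1 + y) ^ p * ∑ i : Fin (p + 1), c i * bern01 p ((i : ℕ) + 1) (y / (1 + y)) := by
          rw [mul_sum]
          refine sum_congr rfl fun i _ => ?_
          rw [mul_left_comm, one_add_pow_mul_bern01_div_one_add i.is_le hy',
            mul_assoc]
      _ = 0 := by rw [hsum, mul_zero]
  have hcoeff : Q.coeff k = c k * p.choose k := by
    simp only [Q, Polynomial.finsetSum_coeff, Polynomial.coeff_monomial, Fin.val_inj,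
      sum_ite_eq', mem_univ, if_true]
  rw [hQ, Polynomial.coeff_zero, eq_comm] at hcoeff
  exact (mul_eq_zero.1 hcoeff).resolve_right (Nat.cast_ne_zero.2 (Nat.choose_pos k.is_le).ne')

theorem eq_of_forall_sum_mul_bern01_eq {p : ℕ} {P Q : Matrix (Fin (p + 1)) (Fin (p + 1)) ℝ}
    (h : ∀ j x, ∑ k, P k j * bern01 p ((k : ℕ) + 1) x = ∑ k, Q k j * bern01 p ((k : ℕ) + 1) x) :
    P = Q := by
  ext k j
  refine Fintype.linearIndependent_iffₛ.1 (linearIndependent_bern01 p) (P · j) (Q · j)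
    (funext fun x => ?_) k
  simpa only [Finset.sum_apply, Pi.smul_apply, smul_eq_mul] using h j x

theorem MinvMat_zero_one (p : ℕ) : MinvMat p 0 1 = 1 :=
  eq_of_forall_sum_mul_bern01_eq fun j x => by
    rw [← bern01_comp_affine]
    simp [Matrix.one_apply]

theorem MinvMat_mul_MinvMat (p : ℕ) (a b c d : ℝ) :
    MinvMat p c d * MinvMat p a b = MinvMat p (a * (1 - c) + b * c) (a * (1 - d) + b * d) := by
  refine eq_of_forall_sum_mul_bern01_eq fun j x => ?_
  calc ∑ l, (MinvMat p c d * MinvMat p a b) l j * bern01 p ((l : ℕ) + 1) x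
      = ∑ k, MinvMat p a b k j * ∑ l, MinvMat p c d l k * bern01 p ((l : ℕ) + 1) x := by
        simp only [Matrix.mul_apply, sum_mul, mul_sum]
        rw [sum_comm]
        exact sum_congr rfl fun _ _ => sum_congr rfl fun _ _ => by ring
    _ = bern01 p ((j : ℕ) + 1)
          (a * (1 - (c * (1 - x) + d * x)) + b * (c * (1 - x) + d * x)) := by
        simp only [← bern01_comp_affine]
    _ = _ := by
        rw [← bern01_comp_affine]
        congr 1
        ring

theorem MinvMat_inv_mul_MinvMat (p : ℕ) {a b : ℝ} (hab : a ≠ b) :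
    MinvMat p (-a / (b - a)) ((1 - a) / (b - a)) * MinvMat p a b = 1 := by
  have hba : b - a ≠ 0 := sub_ne_zero.2 hab.symm
  rw [MinvMat_mul_MinvMat, ← MinvMat_zero_one p]
  congr 1 <;> field_simp <;> ring

/-- For `ξ₁ < ξ₂`, the Bernstein polynomials of degree `p` on `[0,1]` are expressed in the
Bernstein basis on `[ξ₁,ξ₂]` with coefficients `c_{kj} = (M⁻¹)_{kj}` given by the explicit
formula; equivalently, the matrix `M⁻¹` is invertible and its inverse `M` is the
transformation matrix of the relation `tilde-B = M^{−T} B`, i.e. `B = Mᵀ tilde-B`. -/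
theorem stmt1 (p : ℕ) (ξ₁ ξ₂ : ℝ) (h : ξ₁ < ξ₂) :
    (∀ j : Fin (p + 1), ∀ ξ : ℝ,
      bern01 p ((j : ℕ) + 1) ξ =
        ∑ k : Fin (p + 1), MinvMat p ξ₁ ξ₂ k j * bernAB p ((k : ℕ) + 1) ξ₁ ξ₂ ξ) ∧
    IsUnit (MinvMat p ξ₁ ξ₂) ∧
    (∀ k : Fin (p + 1), ∀ ξ : ℝ,
      bernAB p ((k : ℕ) + 1) ξ₁ ξ₂ ξ =
        ∑ j : Fin (p + 1), (MinvMat p ξ₁ ξ₂)⁻¹ j k * bern01 p ((j : ℕ) + 1) ξ) := by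
  have hne : ξ₂ - ξ₁ ≠ 0 := sub_ne_zero.2 h.ne'
  have hinv := MinvMat_inv_mul_MinvMat p h.ne
  refine ⟨fun j ξ => ?_, .of_mul_eq_one_right _ hinv, fun k ξ => ?_⟩
  · simp only [bernAB_eq_bern01 _ _ h.ne, ← bern01_comp_affine]
    congr 1
    field_simp
    ring
  · rw [Matrix.inv_eq_left_inv hinv, bernAB_eq_bern01 _ _ h.ne, ← bern01_comp_affine]
    congr 1
    field_simp
    ring
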